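/- Termination of qModels and qUntil: for every QoS formula Φ of QL with finitely many logical operators, every QoS-extended communicating system S, and all finite runs π, π' ∈ Δ_S with π' ∈ prf(π), the mutually recursive procedures qModels(Φ, S, π, π') and qUntil(Φ₁, G, Φ₂, S, π, π', π'') terminate, because every recursive call of qModels decreases the number of logical operators of the formula and every recursive call of qUntil strictly extends π'' within the finitely many transitions of π, so both procedures eventually reach a base case. -/
import Mathlib


/-! ## Possibly infinite runs -/

/-- A (possibly infinite) run over transitions of type `T`:
either a finite list of transitions or an infinite stream of transitions. -/
inductive Run (T : Type) where
  | fin : List T → Run T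
  | inf : (ℕ → T) → Run T

namespace Run

/-- A run is finite when it is given by a list. -/
def Finite {T : Type} : Run T → Prop
  | .fin _ => True
  | .inf _ => False

/-- Map a function over the elements of a run (e.g. to extract the
language/word of a run from its transitions). -/
def map {T M : Type} (h : T → M) : Run T → Run M
  | .fin l => .fin (l.map h)
  | .inf f => .inf (h ∘ f)

/-- Append a finite run in front of a possibly infinite run. -/
def app {T : Type} (l : List T) : Run T → Run T
  | .fin l' => .fin (l ++ l')
  | .inf f => .inf (fun n => if h : n < l.length then l.get ⟨n, h⟩ else f (n - l.length))

/-- Append of possibly infinite runs (an infinite run absorbs whatever follows). -/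
def appR {T : Type} : Run T → Run T → Run T
  | .fin l, r => app l r
  | .inf f, _ => .inf f

/-- Prefix order on possibly infinite runs. -/
def IsPrefix {T : Type} : Run T → Run T → Prop
  | .fin l, .fin l' => l <+: l'
  | .fin l, .inf f => ∀ i : Fin l.length, l.get i = f i
  | .inf _, .fin _ => False
  | .inf f, .inf g => f = g

end Run

/-! ## g-choreographies -/

/-- g-choreographies, with the iteration operator `star`. -/
inductive GChor (M : Type) where
  | empty
  | act (m : M)
  | seq (g₁ g₂ : GChor M)
  | alt (g₁ g₂ : GChor M)
  | star (g : GChor M)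

namespace GChor

/-- A g-choreography is `*`-free when it contains no occurrence of the
iteration operator `star`. -/
def StarFree {M : Type} : GChor M → Prop
  | .empty => True
  | .act _ => True
  | .seq g₁ g₂ => StarFree g₁ ∧ StarFree g₂
  | .alt g₁ g₂ => StarFree g₁ ∧ StarFree g₂
  | .star _ => False

/-- The finite words of the language `L[G]` of a g-choreography. -/
def lang {M : Type} : GChor M → Set (List M)
  | .empty => {[]}
  | .act m => {[m]}
  | .seq g₁ g₂ => {l | ∃ l₁ l₂, l₁ ∈ lang g₁ ∧ l₂ ∈ lang g₂ ∧ l = l₁ ++ l₂}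
  | .alt g₁ g₂ => lang g₁ ∪ lang g₂
  | .star g => {l | ∃ ws : List (List M), (∀ w ∈ ws, w ∈ lang g) ∧ l = ws.flatten}

/-- The infinite words of the language `L[G]` of a g-choreography
(arising from infinite unfoldings of `star` or from divergent components). -/
def langInf {M : Type} : GChor M → Set (ℕ → M)
  | .empty => ∅
  | .act _ => ∅
  | .seq g₁ g₂ => langInf g₁ ∪
      {f | ∃ l h, l ∈ lang g₁ ∧ h ∈ langInf g₂ ∧ Run.inf f = Run.app l (Run.inf h)}
  | .alt g₁ g₂ => langInf g₁ ∪ langInf g₂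
  | .star g =>
      {f | ∃ l h, l ∈ lang (GChor.star g) ∧ h ∈ langInf g ∧ Run.inf f = Run.app l (Run.inf h)} ∪
      {f | ∃ w : ℕ → List M, (∀ n, w n ∈ lang g ∧ w n ≠ []) ∧
            ∀ n, Run.IsPrefix (Run.fin (((List.range n).map w).flatten)) (Run.inf f)}

/-- `L[G]` as a set of possibly infinite words. -/
def langR {M : Type} (g : GChor M) : Set (Run M) :=
  {r | ∃ l ∈ lang g, r = .fin l} ∪ {r | ∃ f ∈ langInf g, r = .inf f}

/-- `n`-fold sequential repetition of a g-choreography. -/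
def pow {M : Type} : ℕ → GChor M → GChor M
  | 0, _ => .empty
  | n + 1, g => .seq g (pow n g)

/-- The alternative of all repetitions of `g` up to `n` times. -/
def iterUpTo {M : Type} : ℕ → GChor M → GChor M
  | 0, _ => .empty
  | n + 1, g => .alt (pow (n + 1) g) (iterUpTo n g)

/-- Replace every occurrence of `star` by (the alternative of) at most `n` unfoldings. -/
def unfold {M : Type} (n : ℕ) : GChor M → GChor M
  | .empty => .empty
  | .act m => .act m
  | .seq g₁ g₂ => .seq (unfold n g₁) (unfold n g₂)
  | .alt g₁ g₂ => .alt (unfold n g₁) (unfold n g₂)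
  | .star g => iterUpTo n (unfold n g)

/-- The `n`-bounded language of a g-choreography: each `star` is unfolded at most
`n` times, so all words are finite. -/
def langBnd {M : Type} (n : ℕ) : GChor M → Set (List M)
  | .empty => {[]}
  | .act m => {[m]}
  | .seq g₁ g₂ => {l | ∃ l₁ l₂, l₁ ∈ langBnd n g₁ ∧ l₂ ∈ langBnd n g₂ ∧ l = l₁ ++ l₂}
  | .alt g₁ g₂ => langBnd n g₁ ∪ langBnd n g₂
  | .star g => {l | ∃ ws : List (List M), ws.length ≤ n ∧ (∀ w ∈ ws, w ∈ langBnd n g) ∧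
      l = ws.flatten}

end GChor

/-! ## QL formulas -/

/-- QoS logic formulas: Φ ::= ⊤ | ψ | ¬Φ | Φ ∨ Φ | Φ U_G Φ, where `ψ` ranges over
atomic RCF constraints of type `A` and `G` over g-choreographies on messages `M`. -/
inductive QL (A M : Type) where
  | top
  | atom (ψ : A)
  | neg (Φ : QL A M)
  | or (Φ₁ Φ₂ : QL A M)
  | untl (Φ₁ : QL A M) (g : GChor M) (Φ₂ : QL A M)

namespace QL

/-- `QL⁻`: formulas in which every g-choreography indexing an until is `*`-free. -/
def StarFree {A M : Type} : QL A M → Prop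
  | .top => True
  | .atom _ => True
  | .neg Φ => StarFree Φ
  | .or Φ₁ Φ₂ => StarFree Φ₁ ∧ StarFree Φ₂
  | .untl Φ₁ g Φ₂ => StarFree Φ₁ ∧ g.StarFree ∧ StarFree Φ₂

/-- Replace every `star` in the g-choreographies of a formula by at most `n` unfoldings. -/
def unfold {A M : Type} (n : ℕ) : QL A M → QL A M
  | .top => .top
  | .atom ψ => .atom ψ
  | .neg Φ => .neg (unfold n Φ)
  | .or Φ₁ Φ₂ => .or (unfold n Φ₁) (unfold n Φ₂)
  | .untl Φ₁ g Φ₂ => .untl (unfold n Φ₁) (g.unfold n) (unfold n Φ₂)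

end QL

/-! ## QoS-extended communicating systems and QL semantics -/

/-- A QoS-extended communicating system, abstracted: `T` is the type of transitions,
`A` the type of atomic RCF constraints, `M` the type of interactions labelling
g-choreographies. -/
structure QSystem (T A M : Type) where
  /-- `Δ_S`: the set of finite runs of the system. -/
  Runs : Set (List T)
  /-- `Δ_S^∞`: the set of possibly infinite runs of the system. -/
  RunsInf : Set (Run T)
  /-- The label of a transition; the language `L[π]` of a run is the word of its labels. -/
  lbl : T → M
  /-- The last configuration of a finite run is final. -/
  final : List T → Prop
  /-- `agg_S(π') ⊢_RCF ψ`: the aggregated QoS values of a run entail an atomic constraint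
  in the theory of real closed fields. -/
  entails : Run T → A → Prop
  /-- `L[ρ] ∈ hat-L[G]`: membership of the language of a run in the prefix closure of
  `L[G]` restricted to complete words. -/
  langHat : List T → GChor M → Prop
  /-- `ρ ∈ prf(π)` "up to a final configuration". -/
  prfFinal : Run T → Run T → Prop

/-- The satisfaction relation `⟨π, π'⟩ ⊨_S Φ` of QL. -/
def Sat {T A M : Type} (S : QSystem T A M) : Run T → Run T → QL A M → Prop
  | _, _, .top => True
  | _, π', .atom ψ => S.entails π' ψ
  | π, π', .neg Φ => ¬ Sat S π π' Φ
  | π, π', .or Φ₁ Φ₂ => Sat S π π' Φ₁ ∨ Sat S π π' Φ₂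
  | π, π', .untl Φ₁ g Φ₂ =>
      ∃ π'' : Run T, (π''.map S.lbl) ∈ GChor.langR g ∧
        S.prfFinal (π'.appR π'') π ∧
        Sat S π (π'.appR π'') Φ₂ ∧
        ∀ π''' : Run T, π'''.IsPrefix π'' → π''' ≠ π'' → Sat S π (π'.appR π''') Φ₁

/-- `Φ` admits finite models along `π`: whenever `⟨π, ρ⟩ ⊨_S Φ` for a finite prefix `ρ`
of `π`, there is a finite prefix `π⁻ ∈ Δ_S` of `π` with `⟨π⁻, ρ⟩ ⊨_S Φ`. -/
def FinModels {T A M : Type} (S : QSystem T A M) (π : Run T) (Φ : QL A M) : Prop :=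
  ∀ ρ : List T, (Run.fin ρ).IsPrefix π → Sat S π (.fin ρ) Φ →
    ∃ πm : List T, πm ∈ S.Runs ∧ (Run.fin πm).IsPrefix π ∧ Sat S (.fin πm) (.fin ρ) Φ

/-- The `n`-bounded satisfaction relation: like `Sat`, but each `star` in the
g-choreographies indexing until operators is unfolded at most `n` times. -/
def SatBnd {T A M : Type} (S : QSystem T A M) (n : ℕ) : Run T → List T → QL A M → Prop
  | _, _, .top => True
  | _, π', .atom ψ => S.entails (.fin π') ψ
  | π, π', .neg Φ => ¬ SatBnd S n π π' Φ
  | π, π', .or Φ₁ Φ₂ => SatBnd S n π π' Φ₁ ∨ SatBnd S n π π' Φ₂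
  | π, π', .untl Φ₁ g Φ₂ =>
      ∃ π'' : List T, (π''.map S.lbl) ∈ g.langBnd n ∧
        S.prfFinal (.fin (π' ++ π'')) π ∧
        SatBnd S n π (π' ++ π'') Φ₂ ∧
        ∀ π''' : List T, π''' <+: π'' → π''' ≠ π'' → SatBnd S n π (π' ++ π''') Φ₁

/-! ## The algorithms `qSat`, `qModels`, `qUntil` -/

/-- A QoS-extended communicating system together with the decision procedures
needed to run the algorithms (the RCF decision procedure, decidability of the
language checks, finality checks, and an enumeration of `Δ_S^i`). -/
structure DecSystem (T A M : Type) extends QSystem T A M where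
  decFinal : ∀ ρ : List T, Decidable (final ρ)
  decEntails : ∀ (ρ : List T) (ψ : A), Decidable (entails (.fin ρ) ψ)
  decLangHat : ∀ (ρ : List T) (g : GChor M), Decidable (langHat ρ g)
  /-- Decides whether the language of a run is a prefix of a word of `L[G]`. -/
  decCand : ∀ (ρ : List T) (g : GChor M),
      Decidable (∃ w ∈ GChor.langR g, (Run.fin (ρ.map lbl)).IsPrefix w)
  /-- An enumeration of `Δ_S^i`, the runs of the system of length `i`. -/
  runsOfLen : ℕ → List (List T)
  runsOfLen_spec : ∀ (i : ℕ) (ρ : List T), ρ ∈ runsOfLen i ↔ ρ ∈ Runs ∧ ρ.length = i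

/-- The loop of the `qUntil` algorithm: `c1`/`c2` check `Φ₁`/`Φ₂` (via `qModels`),
`hat` checks membership of the language of a run in `hat-L[G]`, `cand` checks whether
the language of a run is a prefix of a word of `L[G]`; the fuel counts the remaining
transitions of `π` (so fuel `0` corresponds to `π'π'' = π`). -/
def qUntilAux {T : Type} (c1 c2 hat cand : List T → Bool) (π π' : List T) :
    ℕ → List T → Bool
  | fuel, π'' =>
    if hat π'' && c2 (π' ++ π'') then true
    else if !c1 (π' ++ π'') then false
    else
      match fuel with
      | 0 => false
      | fuel + 1 =>
        match π[(π' ++ π'').length]? with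
        | none => false
        | some α =>
          if cand (π'' ++ [α]) then qUntilAux c1 c2 hat cand π π' fuel (π'' ++ [α])
          else false

/-- The algorithm `qModels(Φ, S, π, π')`. -/
def qModels {T A M : Type} (S : DecSystem T A M) : QL A M → List T → List T → Bool
  | .top, _, _ => true
  | .atom ψ, _, π' => @decide _ (S.decEntails π' ψ)
  | .neg Φ, π, π' => !qModels S Φ π π'
  | .or Φ₁ Φ₂, π, π' => qModels S Φ₁ π π' || qModels S Φ₂ π π'
  | .untl Φ₁ g Φ₂, π, π' =>
      qUntilAux (qModels S Φ₁ π) (qModels S Φ₂ π)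
        (fun ρ => @decide _ (S.decLangHat ρ g))
        (fun ρ => @decide _ (S.decCand ρ g))
        π π' (π.length - (π' ++ ([] : List T)).length) []

/-- The algorithm `qUntil(Φ₁, G, Φ₂, S, π, π', π'')`. -/
def qUntil {T A M : Type} (S : DecSystem T A M) (Φ₁ : QL A M) (g : GChor M) (Φ₂ : QL A M)
    (π π' π'' : List T) : Bool :=
  qUntilAux (qModels S Φ₁ π) (qModels S Φ₂ π)
    (fun ρ => @decide _ (S.decLangHat ρ g))
    (fun ρ => @decide _ (S.decCand ρ g))
    π π' (π.length - (π' ++ π'').length) π''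

/-- The algorithm `qSat(Φ, S, k)`: enumerate all runs of `S` of length `i ≤ k` and
return true iff one of them ends in a final configuration and models `Φ` from `ε`. -/
def qSat {T A M : Type} (S : DecSystem T A M) (Φ : QL A M) (k : ℕ) : Bool :=
  (List.range (k + 1)).any fun i =>
    (S.runsOfLen i).any fun π =>
      (@decide _ (S.decFinal π)) && qModels S Φ π []

/-! ## Fuelled versions of `qModels` and `qUntil` (for the termination statement) -/

mutual
/-- A step-indexed version of `qModels`: returns `none` when the fuel is exhausted
before a base case is reached. -/
def qModelsFuel {T A M : Type} (S : DecSystem T A M) :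
    ℕ → QL A M → List T → List T → Option Bool
  | 0, _, _, _ => none
  | _ + 1, .top, _, _ => some true
  | _ + 1, .atom ψ, _, π' => some (@decide _ (S.decEntails π' ψ))
  | n + 1, .neg Φ, π, π' => (qModelsFuel S n Φ π π').map (! ·)
  | n + 1, .or Φ₁ Φ₂, π, π' =>
      match qModelsFuel S n Φ₁ π π', qModelsFuel S n Φ₂ π π' with
      | some b₁, some b₂ => some (b₁ || b₂)
      | _, _ => none
  | n + 1, .untl Φ₁ g Φ₂, π, π' => qUntilFuel S n Φ₁ g Φ₂ π π' []

/-- A step-indexed version of `qUntil`: returns `none` when the fuel is exhausted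
before a base case is reached. -/
def qUntilFuel {T A M : Type} (S : DecSystem T A M) :
    ℕ → QL A M → GChor M → QL A M → List T → List T → List T → Option Bool
  | 0, _, _, _, _, _, _ => none
  | n + 1, Φ₁, g, Φ₂, π, π', π'' =>
      match qModelsFuel S n Φ₂ π (π' ++ π''), qModelsFuel S n Φ₁ π (π' ++ π'') with
      | some b₂, some b₁ =>
          if (@decide _ (S.decLangHat π'' g)) && b₂ then some true
          else if !b₁ then some false
          else
            match π[(π' ++ π'').length]? with
            | none => some false
            | some α =>
                if @decide _ (S.decCand (π'' ++ [α]) g) then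
                  qUntilFuel S n Φ₁ g Φ₂ π π' (π'' ++ [α])
                else some false
      | _, _ => none
end


section TerminationAux
variable {T A M : Type} (S : DecSystem T A M)

private theorem qUntilAux_eq (c1 c2 hat cand : List T → Bool) (π π' : List T) (fuel : ℕ)
    (π'' : List T) :
    qUntilAux c1 c2 hat cand π π' fuel π'' =
      (if hat π'' && c2 (π' ++ π'') then true
      else if !c1 (π' ++ π'') then false
      else match fuel with
        | 0 => false
        | fuel + 1 =>
          match π[(π' ++ π'').length]? with
          | none => false
          | some α =>
            if cand (π'' ++ [α]) then qUntilAux c1 c2 hat cand π π' fuel (π'' ++ [α])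
            else false) := by
  cases fuel <;> rfl

private theorem fuel_mono_step : ∀ n : ℕ,
    (∀ (Φ : QL A M) (π π' : List T) (b : Bool),
      qModelsFuel S n Φ π π' = some b → qModelsFuel S (n+1) Φ π π' = some b) ∧
    (∀ (Φ₁ : QL A M) (g : GChor M) (Φ₂ : QL A M) (π π' π'' : List T) (b : Bool),
      qUntilFuel S n Φ₁ g Φ₂ π π' π'' = some b →
      qUntilFuel S (n+1) Φ₁ g Φ₂ π π' π'' = some b) := by
  intro n
  induction n with
  | zero =>
    constructor
    · intro Φ π π' b h; rw [qModelsFuel] at h; exact absurd h (by simp)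
    · intro Φ₁ g Φ₂ π π' π'' b h; rw [qUntilFuel] at h; exact absurd h (by simp)
  | succ n ih =>
    obtain ⟨ihM, ihU⟩ := ih
    constructor
    · intro Φ π π' b h
      cases Φ with
      | top => exact h
      | atom ψ => exact h
      | neg Φ =>
        rw [qModelsFuel] at h ⊢
        obtain ⟨b', hb', rfl⟩ := Option.map_eq_some_iff.mp h
        rw [ihM _ _ _ _ hb']; rfl
      | or Φ₁ Φ₂ =>
        rw [qModelsFuel] at h ⊢
        cases h1 : qModelsFuel S n Φ₁ π π' with
        | none => rw [h1] at h; exact absurd h (by simp)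
        | some b₁ =>
          cases h2 : qModelsFuel S n Φ₂ π π' with
          | none => rw [h1, h2] at h; exact absurd h (by simp)
          | some b₂ =>
            rw [h1, h2] at h
            rw [ihM _ _ _ _ h1, ihM _ _ _ _ h2]
            exact h
      | untl Φ₁ g Φ₂ =>
        rw [qModelsFuel] at h ⊢
        exact ihU _ _ _ _ _ _ _ h
    · intro Φ₁ g Φ₂ π π' π'' b h
      rw [qUntilFuel] at h ⊢
      cases h2 : qModelsFuel S n Φ₂ π (π' ++ π'') with
      | none => rw [h2] at h; exact absurd h (by simp)
      | some b₂ =>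
        cases h1 : qModelsFuel S n Φ₁ π (π' ++ π'') with
        | none => rw [h1, h2] at h; exact absurd h (by simp)
        | some b₁ =>
          rw [h1, h2] at h
          rw [ihM _ _ _ _ h2, ihM _ _ _ _ h1]
          simp only at h ⊢
          split_ifs at h ⊢ with hc1 hc2
          · exact h
          · exact h
          · cases hα : π[(π' ++ π'').length]? with
            | none => rw [hα] at h; exact h
            | some α =>
              rw [hα] at h
              simp only at h ⊢
              split_ifs at h ⊢ with hcand
              · exact ihU _ _ _ _ _ _ _ h
              · exact h

private theorem qModelsFuel_mono {n m : ℕ} (hnm : n ≤ m) {Φ : QL A M} {π π' : List T} {b : Bool}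
    (h : qModelsFuel S n Φ π π' = some b) : qModelsFuel S m Φ π π' = some b := by
  induction hnm with
  | refl => exact h
  | step _ ih => exact (fuel_mono_step S _).1 _ _ _ _ ih

private theorem qUntilFuel_mono {n m : ℕ} (hnm : n ≤ m) {Φ₁ Φ₂ : QL A M} {g : GChor M}
    {π π' π'' : List T} {b : Bool}
    (h : qUntilFuel S n Φ₁ g Φ₂ π π' π'' = some b) :
    qUntilFuel S m Φ₁ g Φ₂ π π' π'' = some b := by
  induction hnm with
  | refl => exact h
  | step _ ih => exact (fuel_mono_step S _).2 _ _ _ _ _ _ _ ih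

private theorem qUntil_exists (Φ₁ Φ₂ : QL A M) (g : GChor M) (π : List T)
    (H1 : ∀ π', ∃ n, qModelsFuel S n Φ₁ π π' = some (qModels S Φ₁ π π'))
    (H2 : ∀ π', ∃ n, qModelsFuel S n Φ₂ π π' = some (qModels S Φ₂ π π')) :
    ∀ π' π'', ∃ n, qUntilFuel S n Φ₁ g Φ₂ π π' π'' = some (qUntil S Φ₁ g Φ₂ π π' π'') := by
  intro π'
  suffices H : ∀ (k : ℕ) (π'' : List T), π.length - (π' ++ π'').length ≤ k →
      ∃ n, qUntilFuel S n Φ₁ g Φ₂ π π' π'' = some (qUntil S Φ₁ g Φ₂ π π' π'') by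
    intro π''; exact H _ π'' le_rfl
  intro k
  induction k with
  | zero =>
    intro π'' hk
    obtain ⟨n₁, hn₁⟩ := H1 (π' ++ π'')
    obtain ⟨n₂, hn₂⟩ := H2 (π' ++ π'')
    refine ⟨max n₁ n₂ + 1, ?_⟩
    have hlen : π.length ≤ (π' ++ π'').length := by omega
    have hfz : π.length - (π' ++ π'').length = 0 := by omega
    have hα : π[(π' ++ π'').length]? = none := List.getElem?_eq_none_iff.mpr hlen
    rw [qUntilFuel, qModelsFuel_mono S (le_max_left n₁ n₂) hn₁,
        qModelsFuel_mono S (le_max_right n₁ n₂) hn₂]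
    rw [qUntil, qUntilAux_eq, hfz, hα]
    simp only
    split_ifs <;> rfl
  | succ k ih =>
    intro π'' hk
    obtain ⟨n₁, hn₁⟩ := H1 (π' ++ π'')
    obtain ⟨n₂, hn₂⟩ := H2 (π' ++ π'')
    cases hα : π[(π' ++ π'').length]? with
    | none =>
      refine ⟨max n₁ n₂ + 1, ?_⟩
      have hlen : π.length ≤ (π' ++ π'').length := by
        by_contra hc
        rw [List.getElem?_eq_getElem (by omega)] at hα
        exact absurd hα (by simp)
      have hfz : π.length - (π' ++ π'').length = 0 := by omega
      rw [qUntilFuel, qModelsFuel_mono S (le_max_left n₁ n₂) hn₁,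
          qModelsFuel_mono S (le_max_right n₁ n₂) hn₂]
      rw [qUntil, qUntilAux_eq, hfz, hα]
      simp only
      split_ifs <;> rfl
    | some α =>
      have hlt : (π' ++ π'').length < π.length := by
        by_contra hc
        rw [List.getElem?_eq_none_iff.mpr (by omega)] at hα
        exact absurd hα (by simp)
      have hlen' : (π' ++ (π'' ++ [α])).length = (π' ++ π'').length + 1 := by
        simp [List.length_append]; omega
      obtain ⟨n₃, hn₃⟩ := ih (π'' ++ [α]) (by omega)
      refine ⟨max (max n₁ n₂) n₃ + 1, ?_⟩
      rw [qUntilFuel,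
          qModelsFuel_mono S (le_trans (le_max_left n₁ n₂) (le_max_left _ n₃)) hn₁,
          qModelsFuel_mono S (le_trans (le_max_right n₁ n₂) (le_max_left _ n₃)) hn₂]
      have hfs : π.length - (π' ++ π'').length = (π.length - (π' ++ (π'' ++ [α])).length) + 1 := by
        rw [hlen']; omega
      rw [qUntil, qUntilAux_eq, hfs, hα]
      simp only
      have hrec := qUntilFuel_mono S (le_max_right (max n₁ n₂) n₃) hn₃
      rw [qUntil] at hrec
      split_ifs with hc1 hc2 hcand
      · rfl
      · rfl
      · exact hrec
      · rfl

private theorem qModels_exists (π : List T) :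
    ∀ (Φ : QL A M) (π' : List T),
      ∃ n, qModelsFuel S n Φ π π' = some (qModels S Φ π π') := by
  intro Φ
  induction Φ with
  | top => intro π'; exact ⟨1, rfl⟩
  | atom ψ => intro π'; exact ⟨1, rfl⟩
  | neg Φ ih =>
    intro π'
    obtain ⟨n, hn⟩ := ih π'
    exact ⟨n + 1, by rw [qModelsFuel, hn]; rfl⟩
  | or Φ₁ Φ₂ ih₁ ih₂ =>
    intro π'
    obtain ⟨n₁, hn₁⟩ := ih₁ π'
    obtain ⟨n₂, hn₂⟩ := ih₂ π'
    refine ⟨max n₁ n₂ + 1, ?_⟩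
    rw [qModelsFuel, qModelsFuel_mono S (le_max_left n₁ n₂) hn₁,
        qModelsFuel_mono S (le_max_right n₁ n₂) hn₂]
    rfl
  | untl Φ₁ g Φ₂ ih₁ ih₂ =>
    intro π'
    obtain ⟨n, hn⟩ := qUntil_exists S Φ₁ Φ₂ g π ih₁ ih₂ π' []
    exact ⟨n + 1, by rw [qModelsFuel, hn]; rfl⟩

end TerminationAux

/-- **Termination of `qModels` and `qUntil`**: for every (finite) QL formula `Φ`
and finite runs `π, π' ∈ Δ_S` with `π' ∈ prf(π)`, the mutually recursive procedures
terminate: some finite amount of fuel suffices for the step-indexed versions to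
reach a base case and produce the result of `qModels`/`qUntil`. -/
theorem qModels_qUntil_terminate {T A M : Type} (S : DecSystem T A M)
    (Φ : QL A M) (π π' : List T) (hπ : π ∈ S.Runs) (hπ' : π' ∈ S.Runs)
    (hpre : π' <+: π) :
    (∃ n : ℕ, qModelsFuel S n Φ π π' = some (qModels S Φ π π')) ∧
    (∀ (Φ₁ Φ₂ : QL A M) (g : GChor M) (π'' : List T),
      ∃ n : ℕ, qUntilFuel S n Φ₁ g Φ₂ π π' π'' = some (qUntil S Φ₁ g Φ₂ π π' π'')) := by
  exact ⟨qModels_exists S π Φ π', fun Φ₁ Φ₂ g π'' => qUntil_exists S Φ₁ Φ₂ g π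
    (qModels_exists S π Φ₁) (qModels_exists S π Φ₂) π' π''⟩
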